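/- Let c ∈ ℂ \ {0}, let t > 0 be fixed, and let F : ℝⁿ → ℂ be bounded and continuous. Suppose there exists a sequence (τ_k) in ℝⁿ with |τ_k| → +∞ such that F(·+τ_k) → c·F(·) uniformly on compact subsets of ℝⁿ. Then the function x ↦ (G(t)F)(x) := (4πt)^{−n/2} ∫_{ℝⁿ} e^{−|y|²/(4t)} F(x−y) dy (the action of the Gaussian semigroup) is bounded and continuous, and (G(t)F)(·+τ_k) → c·(G(t)F)(·) uniformly on compact subsets of ℝⁿ; i.e. G(t)F is uniformly Poisson c-stable with the same sequence. -/

import Mathlib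

open MeasureTheory Filter Topology Real

/-- The action of the Gaussian semigroup at time `t > 0` on `F : ℝⁿ → ℂ`:
`(G(t)F)(x) = (4πt)^{-n/2} ∫_{ℝⁿ} e^{-|y|²/(4t)} F(x−y) dy`. -/
noncomputable def gaussAction (n : ℕ) (t : ℝ) (F : EuclideanSpace ℝ (Fin n) → ℂ)
    (x : EuclideanSpace ℝ (Fin n)) : ℂ :=
  (((4 * Real.pi * t) ^ (-(n : ℝ) / 2) : ℝ) : ℂ) *
    ∫ y : EuclideanSpace ℝ (Fin n), (Real.exp (-‖y‖ ^ 2 / (4 * t)) : ℂ) * F (x - y)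

open scoped Convolution

/-! `G(t)F` is the convolution of `F` with an integrable kernel, and convolution commutes with
translations, so `G(t)F(· + τ_k) - c • G(t)F` is the convolution of the kernel with
`F(· + τ_k) - c • F`. These functions are uniformly bounded and tend to `0` uniformly on compact
sets; for `x` in a compact `K` and fixed `y` the integrand therefore tends to `0` as `(k, x)` runs
along `atTop ×ˢ 𝓟 K`, and dominated convergence along this countably generated filter is exactly
uniform convergence on `K`. -/

theorem tendstoUniformlyOn_iff_tendsto_sub {ι α E : Type*} [SeminormedAddCommGroup E]
    {F : ι → α → E} {f : α → E} {p : Filter ι} {s : Set α} :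
    TendstoUniformlyOn F f p s ↔
      Tendsto (fun q : ι × α => F q.1 q.2 - f q.2) (p ×ˢ 𝓟 s) (𝓝 0) := by
  simp only [Metric.tendstoUniformlyOn_iff, Metric.tendsto_nhds, eventually_prod_principal_iff,
    dist_eq_norm, sub_zero, norm_sub_rev]

namespace MeasureTheory

section Convolution

variable {𝕜 G E E' F : Type*} [NontriviallyNormedField 𝕜]
  [NormedAddCommGroup E] [NormedSpace 𝕜 E] [NormedAddCommGroup E'] [NormedSpace 𝕜 E']
  [NormedAddCommGroup F] [NormedSpace 𝕜 F] [AddCommGroup G] [MeasurableSpace G]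
  (L : E →L[𝕜] E' →L[𝕜] F) {μ : Measure G} {f : G → E}

theorem Integrable.convolutionExistsAt_of_norm_le [TopologicalSpace G]
    [IsTopologicalAddGroup G] [BorelSpace G] [SecondCountableTopologyEither G E']
    {g : G → E'} {C : ℝ} (hf : Integrable f μ) (hg : Continuous g) (hgC : ∀ x, ‖g x‖ ≤ C)
    (x : G) : ConvolutionExistsAt f g x L μ :=
  BddAbove.convolutionExistsAt' L ⟨C, by rintro _ ⟨y, -, rfl⟩; exact hgC y⟩ MeasurableSet.univ
    (Set.subset_univ _) hf.integrableOn hg.aestronglyMeasurable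

variable [NormedSpace ℝ F]

theorem convolution_comp_add_right (g : G → E') (a : G) :
    (f ⋆[L, μ] fun y => g (y + a)) = fun x => (f ⋆[L, μ] g) (x + a) := by
  ext x
  simp only [convolution_def, sub_add_eq_add_sub]

theorem norm_convolution_le_of_norm_le {g : G → E'} {C : ℝ} (hf : Integrable f μ)
    (hgC : ∀ x, ‖g x‖ ≤ C) (x : G) : ‖(f ⋆[L, μ] g) x‖ ≤ ‖L‖ * (∫ t, ‖f t‖ ∂μ) * C := by
  rw [convolution_def, mul_assoc, ← integral_mul_const, ← integral_const_mul]
  refine norm_integral_le_of_norm_le ((hf.norm.mul_const C).const_mul ‖L‖)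
    (ae_of_all _ fun t => ?_)
  rw [← mul_assoc]
  exact L.le_of_opNorm₂_le_of_le le_rfl le_rfl (hgC _)

variable [TopologicalSpace G] [IsTopologicalAddGroup G] [BorelSpace G]
  [SecondCountableTopologyEither G E']

theorem tendstoUniformlyOn_convolution {ι : Type*} {l : Filter ι} [l.IsCountablyGenerated]
    {g : ι → G → E'} {g₀ : G → E'} {C C₀ : ℝ} (hf : Integrable f μ)
    (hg : ∀ i, Continuous (g i)) (hg₀ : Continuous g₀) (hgC : ∀ i x, ‖g i x‖ ≤ C)
    (hg₀C : ∀ x, ‖g₀ x‖ ≤ C₀) (hlim : ∀ K, IsCompact K → TendstoUniformlyOn g g₀ l K)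
    {K : Set G} (hK : IsCompact K) :
    TendstoUniformlyOn (fun i => f ⋆[L, μ] g i) (f ⋆[L, μ] g₀) l K := by
  have hdiff : ∀ q : ι × G, (f ⋆[L, μ] g q.1) q.2 - (f ⋆[L, μ] g₀) q.2 =
      ∫ t, L (f t) (g q.1 (q.2 - t) - g₀ (q.2 - t)) ∂μ := fun q => by
    simp only [convolution_def, map_sub]
    exact (integral_sub (hf.convolutionExistsAt_of_norm_le L (hg q.1) (hgC q.1) q.2)
      (hf.convolutionExistsAt_of_norm_le L hg₀ hg₀C q.2)).symm
  rw [tendstoUniformlyOn_iff_tendsto_sub]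
  simp only [hdiff]
  rw [← integral_zero G F]
  refine tendsto_integral_filter_of_dominated_convergence (fun t => ‖L‖ * ‖f t‖ * (C + C₀))
    (Eventually.of_forall fun q => ?_) (Eventually.of_forall fun q => ae_of_all _ fun t => ?_)
    (hf.norm.const_mul _ |>.mul_const _) (ae_of_all _ fun t => ?_)
  · exact hf.aestronglyMeasurable.convolution_integrand_snd' L
      ((hg q.1).sub hg₀).aestronglyMeasurable
  · exact L.le_of_opNorm₂_le_of_le le_rfl le_rfl
      ((norm_sub_le _ _).trans (add_le_add (hgC _ _) (hg₀C _)))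
  · have hKt : IsCompact ((· - t) '' K) := hK.image (continuous_sub_right t)
    have hshift : Tendsto (fun q : ι × G => (q.1, q.2 - t)) (l ×ˢ 𝓟 K)
        (l ×ˢ 𝓟 ((· - t) '' K)) :=
      tendsto_id.prodMap (tendsto_principal_principal.2 fun x hx => Set.mem_image_of_mem _ hx)
    exact ((L (f t)).continuous.tendsto' 0 0 (map_zero _)).comp
      ((tendstoUniformlyOn_iff_tendsto_sub.1 (hlim _ hKt)).comp hshift)

theorem tendstoUniformlyOn_convolution_comp_add [SMulCommClass ℝ 𝕜 F] {ι : Type*}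
    {l : Filter ι} [l.IsCountablyGenerated] {g : G → E'} {C : ℝ} {c : 𝕜} {τ : ι → G}
    (hf : Integrable f μ) (hg : Continuous g) (hgC : ∀ x, ‖g x‖ ≤ C)
    (hrec : ∀ K, IsCompact K → TendstoUniformlyOn (fun i x => g (x + τ i)) (c • g) l K)
    {K : Set G} (hK : IsCompact K) :
    TendstoUniformlyOn (fun i x => (f ⋆[L, μ] g) (x + τ i)) (c • (f ⋆[L, μ] g)) l K := by
  have hcg : ∀ x, ‖(c • g) x‖ ≤ ‖c‖ * C := fun x => by
    rw [Pi.smul_apply, norm_smul]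
    exact mul_le_mul_of_nonneg_left (hgC x) (norm_nonneg c)
  have := tendstoUniformlyOn_convolution L (g := fun i x => g (x + τ i)) hf
    (fun i => hg.comp (continuous_add_const (τ i)))
    (hg.const_smul c) (fun i x => hgC _) hcg hrec hK
  simpa only [convolution_comp_add_right, convolution_smul] using this

end Convolution

end MeasureTheory

noncomputable def heatKernel (n : ℕ) (t : ℝ) (y : EuclideanSpace ℝ (Fin n)) : ℂ :=
  (((4 * Real.pi * t) ^ (-(n : ℝ) / 2) : ℝ) : ℂ) * (Real.exp (-‖y‖ ^ 2 / (4 * t)) : ℂ)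

theorem integrable_heatKernel (n : ℕ) {t : ℝ} (ht : 0 < t) : Integrable (heatKernel n t) := by
  have hb : 0 < ((1 / (4 * t) : ℝ) : ℂ).re := by simpa using by positivity
  refine (GaussianFourier.integrable_cexp_neg_mul_sq_norm_add hb 0
    (0 : EuclideanSpace ℝ (Fin n))).const_mul
    (((4 * Real.pi * t) ^ (-(n : ℝ) / 2) : ℝ) : ℂ) |>.congr (ae_of_all _ fun y => ?_)
  simp only [heatKernel, Complex.ofReal_exp, inner_zero_left, Complex.ofReal_zero, mul_zero,
    add_zero]
  congr 2
  push_cast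
  ring

theorem gaussAction_eq_convolution (n : ℕ) (t : ℝ) (F : EuclideanSpace ℝ (Fin n) → ℂ) :
    gaussAction n t F = heatKernel n t ⋆[ContinuousLinearMap.mul ℂ ℂ] F := by
  ext x
  simp only [gaussAction, convolution_mul, heatKernel, mul_assoc, integral_const_mul]

theorem stmt15_general (n : ℕ) (c : ℂ) (t : ℝ) (ht : 0 < t)
    (F : EuclideanSpace ℝ (Fin n) → ℂ) (hFc : Continuous F)
    (hFb : ∃ C, ∀ x, ‖F x‖ ≤ C)
    (τ : ℕ → EuclideanSpace ℝ (Fin n))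
    (hrec : ∀ K : Set (EuclideanSpace ℝ (Fin n)), IsCompact K →
      TendstoUniformlyOn (fun k x => F (x + τ k)) (fun x => c * F x) atTop K) :
    Continuous (gaussAction n t F) ∧
    (∃ C, ∀ x, ‖gaussAction n t F x‖ ≤ C) ∧
    ∀ K : Set (EuclideanSpace ℝ (Fin n)), IsCompact K →
      TendstoUniformlyOn (fun k x => gaussAction n t F (x + τ k))
        (fun x => c * gaussAction n t F x) atTop K := by
  obtain ⟨C, hC⟩ := hFb
  have hk := integrable_heatKernel n ht
  rw [gaussAction_eq_convolution]
  refine ⟨?_, ⟨_, norm_convolution_le_of_norm_le _ hk hC⟩, fun K hK => ?_⟩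
  · exact BddAbove.continuous_convolution_right_of_integrable _
      ⟨C, by rintro _ ⟨x, rfl⟩; exact hC x⟩ hk hFc
  · exact tendstoUniformlyOn_convolution_comp_add _ hk hFc hC hrec hK

/-- If `F : ℝⁿ → ℂ` is bounded, continuous and uniformly Poisson `c`-stable with
sequence `(τ_k)`, then so is `G(t)F` for each fixed `t > 0`, with the same sequence. -/
theorem stmt15 (n : ℕ) (c : ℂ) (hc : c ≠ 0) (t : ℝ) (ht : 0 < t)
    (F : EuclideanSpace ℝ (Fin n) → ℂ) (hFc : Continuous F)
    (hFb : ∃ C, ∀ x, ‖F x‖ ≤ C)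
    (τ : ℕ → EuclideanSpace ℝ (Fin n)) (hτ : Tendsto (fun k => ‖τ k‖) atTop atTop)
    (hrec : ∀ K : Set (EuclideanSpace ℝ (Fin n)), IsCompact K →
      TendstoUniformlyOn (fun k x => F (x + τ k)) (fun x => c * F x) atTop K) :
    Continuous (gaussAction n t F) ∧
    (∃ C, ∀ x, ‖gaussAction n t F x‖ ≤ C) ∧
    ∀ K : Set (EuclideanSpace ℝ (Fin n)), IsCompact K →
      TendstoUniformlyOn (fun k x => gaussAction n t F (x + τ k))
        (fun x => c * gaussAction n t F x) atTop K :=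
  stmt15_general n c t ht F hFc hFb τ hrec
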